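/- Let $N = S^1 \times \Sigma$ for a closed oriented surface $\Sigma$, let $c = [S^1 \times *] \in H_1(N;\mathbb{Z})$, let $e \in H^2(N;\mathbb{Z})$, and let $p_*\colon H^2(X_e;\mathbb{Q}) \to H^1(N;\mathbb{Q})$ be integration along the fiber of the $S^1$-bundle $X_e \to N$ with Euler class $e$. Then $p_*(H^2(X_e;\mathbb{Q})) \subseteq \{\phi \in H^1(N;\mathbb{Q}) : \phi(c) = 0\}$ if and only if $e$ is a non-zero multiple of the Poincaré dual of $c$. -/

import Mathlib

open LinearMap

section

variable {K V W : Type*} [Field K] [AddCommGroup V] [Module K V] [AddCommGroup W] [Module K W]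

theorem LinearMap.exists_smul_eq_of_ker_le_ker {f g : V →ₗ[K] K} (h : ker f ≤ ker g) :
    ∃ l : K, l • f = g := by
  have hg : g ∈ Submodule.span K (Set.range fun _ : Unit => f) :=
    mem_span_of_iInf_ker_le_ker (by simpa using h)
  simpa [Submodule.mem_span_singleton] using hg

theorem ker_le_ker_iff_exists_smul_eq {pairing : W →ₗ[K] V →ₗ[K] K}
    (hpairing : Function.Injective pairing) {d : W} (hd : d ≠ 0) (e : W) :
    ker (pairing e) ≤ ker (pairing d) ↔ ∃ l : K, l ≠ 0 ∧ e = l • d := by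
  constructor
  · intro h
    obtain ⟨l, hl⟩ := exists_smul_eq_of_ker_le_ker h
    have hle : l • e = d := hpairing (by rw [map_smul, hl])
    have hl0 : l ≠ 0 := by
      rintro rfl
      exact hd (by simpa using hle.symm)
    exact ⟨l⁻¹, inv_ne_zero hl0, by rw [← hle, smul_smul, inv_mul_cancel₀ hl0, one_smul]⟩
  · rintro ⟨l, hl0, rfl⟩
    rw [map_smul, ker_smul _ _ hl0]

end

theorem stmt5_general {H1N H2N : Type*}
    [AddCommGroup H1N] [Module ℚ H1N]
    [AddCommGroup H2N] [Module ℚ H2N]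
    (cup : H2N →ₗ[ℚ] (H1N →ₗ[ℚ] ℚ))
    (hnondeg : ∀ x : H2N, cup x = 0 → x = 0)
    (evc : H1N →ₗ[ℚ] ℚ) (hevc : evc ≠ 0)
    (PDc : H2N) (hPD : cup PDc = evc)
    (e : H2N)
    (image : Submodule ℚ H1N) (hGysin : image = LinearMap.ker (cup e)) :
    ((image : Set H1N) ⊆ {φ : H1N | evc φ = 0}) ↔ ∃ l : ℚ, l ≠ 0 ∧ e = l • PDc := by
  subst hGysin hPD
  have hPDc : PDc ≠ 0 := by
    rintro rfl
    exact hevc (map_zero cup)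
  exact ker_le_ker_iff_exists_smul_eq ((injective_iff_map_eq_zero cup).2 hnondeg) hPDc e

/-- let `N = S¹ × Σ`, `c = [S¹ × *] ∈ H₁(N;ℤ)`, and `X_e → N` the `S¹`-bundle
with Euler class `e`.  We model `H¹(N;ℚ)` and `H²(N;ℚ)` abstractly; the cup product pairing
`H²(N;ℚ) × H¹(N;ℚ) → H³(N;ℚ) ≅ ℚ` is nondegenerate (Poincaré duality), `evc` is evaluation
on `c` (a nonzero functional), and `PDc` is the Poincaré dual of `c`, characterized by
`cup PDc = evc`.  By the Gysin sequence `p₊(H²(X_e;ℚ)) = ker(∪ e)`.  Then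
`p₊(H²(X_e;ℚ)) ⊆ {φ | φ(c) = 0}` if and only if `e` is a non-zero multiple of `PDc`. -/
theorem stmt5 {H1N H2N : Type*}
    [AddCommGroup H1N] [Module ℚ H1N] [FiniteDimensional ℚ H1N]
    [AddCommGroup H2N] [Module ℚ H2N] [FiniteDimensional ℚ H2N]
    (cup : H2N →ₗ[ℚ] (H1N →ₗ[ℚ] ℚ))
    (hnondeg : ∀ x : H2N, cup x = 0 → x = 0)
    (evc : H1N →ₗ[ℚ] ℚ) (hevc : evc ≠ 0)
    (PDc : H2N) (hPD : cup PDc = evc)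
    (e : H2N)
    (image : Submodule ℚ H1N) (hGysin : image = LinearMap.ker (cup e)) :
    ((image : Set H1N) ⊆ {φ : H1N | evc φ = 0}) ↔ ∃ l : ℚ, l ≠ 0 ∧ e = l • PDc :=
  stmt5_general cup hnondeg evc hevc PDc hPD e image hGysin
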